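/- Sortedness contract for Treesort: for every list l : List ℤ, is_asorted (treesort l) holds. -/

import Mathlib

/-- `is_asorted l` holds iff `l` is sorted in ascending order w.r.t. `≤`. -/
def is_asorted : List ℤ → Prop
  | [] => True
  | [_] => True
  | h₁ :: h₂ :: t => h₁ ≤ h₂ ∧ is_asorted (h₂ :: t)

/-- Binary trees of integers: `node left key right`. -/
inductive ITree : Type
  | leaf : ITree
  | node : ITree → ℤ → ITree → ITree

/-- Insertion into a binary tree, going left on `≤`. -/
def tinsert (x : ℤ) : ITree → ITree
  | .leaf => .node .leaf x .leaf
  | .node l n r => if x ≤ n then .node (tinsert x l) n r else .node l n (tinsert x r)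

/-- In-order flattening of a binary tree. -/
def flatten : ITree → List ℤ
  | .leaf => []
  | .node l n r => flatten l ++ n :: flatten r

/-- Treesort: insert all elements into a binary tree, then flatten it. -/
def treesort (l : List ℤ) : List ℤ := flatten (l.foldr tinsert .leaf)

/-!
On a tree whose in-order traversal is sorted, `tinsert x` descends into the part of the traversal
holding the first key `≥ x`, which is exactly where `orderedInsert` puts `x`. So flattening turns
tree insertion into sorted-list insertion, and treesort coincides with insertion sort.
-/

namespace List

variable {α : Type*} (r : α → α → Prop) [DecidableRel r]

theorem orderedInsert_append_cons_of_rel {x b : α} (l₁ l₂ : List α) (h : r x b) :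
    (l₁ ++ b :: l₂).orderedInsert r x = l₁.orderedInsert r x ++ b :: l₂ := by
  induction l₁ with
  | nil => simp [h]
  | cons a l₁ ih => by_cases hxa : r x a <;> simp [hxa, ih]

theorem orderedInsert_append_of_forall_not_rel {x : α} {l₁ : List α} (l₂ : List α)
    (h : ∀ a ∈ l₁, ¬ r x a) : (l₁ ++ l₂).orderedInsert r x = l₁ ++ l₂.orderedInsert r x := by
  induction l₁ with
  | nil => rfl
  | cons a l₁ ih =>
    simp only [forall_mem_cons] at h
    simp [h.1, ih h.2]

end List

theorem is_asorted_iff_isChain : ∀ {l : List ℤ}, is_asorted l ↔ l.IsChain (· ≤ ·)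
  | [] | [_] => by simp [is_asorted]
  | a :: b :: t => by simp [is_asorted, is_asorted_iff_isChain (l := b :: t)]

theorem flatten_tinsert (x : ℤ) {t : ITree} (ht : (flatten t).Pairwise (· ≤ ·)) :
    flatten (tinsert x t) = (flatten t).orderedInsert (· ≤ ·) x := by
  induction t with
  | leaf => rfl
  | node l n r ihl ihr =>
    simp only [flatten, List.pairwise_append, List.pairwise_cons, List.mem_cons] at ht
    obtain ⟨hl, ⟨-, hr⟩, hlr⟩ := ht
    by_cases hxn : x ≤ n
    · simp [tinsert, flatten, hxn, ihl hl, List.orderedInsert_append_cons_of_rel _ _ _ hxn]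
    · have hlx : ∀ a ∈ flatten l, ¬ x ≤ a := fun a ha hxa =>
        hxn (hxa.trans (hlr a ha n (Or.inl rfl)))
      simp [tinsert, flatten, hxn, ihr hr, List.orderedInsert_append_of_forall_not_rel _ _ hlx]

theorem treesort_eq_insertionSort (l : List ℤ) : treesort l = l.insertionSort (· ≤ ·) := by
  induction l with
  | nil => rfl
  | cons a l ih =>
    unfold treesort at ih ⊢
    rw [List.foldr_cons, flatten_tinsert a (ih ▸ List.pairwise_insertionSort _ l), ih,
      List.insertionSort_cons]

theorem treesort_sorted_contract (l : List ℤ) : is_asorted (treesort l) := by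
  rw [is_asorted_iff_isChain, treesort_eq_insertionSort, ← List.sortedLE_iff_isChain]
  exact List.sortedLE_insertionSort
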